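/- arXiv:1702.00745 — 2 statements merged into one kernel-verified Lean document; each statement's English description precedes it below -/
import Mathlib

section
/- Let D ⊂ ℝ^d be open, v ∈ C²(D), and let a, n, k, α, β be real numbers. Define L v := aΔv + k²n v and M v := x·∇v − i k β v + α v. Then the pointwise identity 2 Re( conj(M v) · L v ) = div( 2 Re( conj(M v) a ∇v ) + x (k²n|v|² − a|∇v|²) ) − (2α − d + 2) a |∇v|² − (d − 2α) n k² |v|² holds in D. -/
noncomputable section

/-- `j`-th partial derivative of a complex-valued function on `ℝ^d`. -/
def pd {d : ℕ} (v : EuclideanSpace ℝ (Fin d) → ℂ) (j : Fin d)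
    (x : EuclideanSpace ℝ (Fin d)) : ℂ :=
  fderiv ℝ v x (EuclideanSpace.single j 1)

/-- Laplacian as the sum of the second partial derivatives. -/
def lap {d : ℕ} (v : EuclideanSpace ℝ (Fin d) → ℂ)
    (x : EuclideanSpace ℝ (Fin d)) : ℂ :=
  ∑ j : Fin d, pd (pd v j) j x

/-- `|∇v|² = Σ_j |∂_j v|²`. -/
def gradNormSq {d : ℕ} (v : EuclideanSpace ℝ (Fin d) → ℂ)
    (x : EuclideanSpace ℝ (Fin d)) : ℝ :=
  ∑ j : Fin d, ‖pd v j x‖ ^ 2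

/-- `x·∇v`. -/
def xdot {d : ℕ} (v : EuclideanSpace ℝ (Fin d) → ℂ)
    (x : EuclideanSpace ℝ (Fin d)) : ℂ :=
  ∑ j : Fin d, (x j : ℂ) * pd v j x

/-! Write `⟪z, w⟫ = Re (conj z * w)` for the real inner product on `ℂ` and expand the divergence
of the flux by the product rule. By symmetry of the Hessian, `∂ⱼ (x·∇v) = ∂ⱼ v + x·∇(∂ⱼ v)`, so the
half `2 Re (conj (M v) a ∇v)` contributes the terms `2a ⟪x·∇(∂ⱼ v), ∂ⱼ v⟫`, which cancel against
`-a x·∇|∇v|²` from the other half. The term `-ikβv` drops out because `⟪c w, w⟫ = Re c ‖w‖²`, and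
`∑ⱼ ∂ⱼ xⱼ = d` produces the dimension-dependent coefficients. -/

open ComplexConjugate
open scoped InnerProductSpace

theorem Complex.re_conj_mul_eq_inner (z w : ℂ) : (conj z * w).re = ⟪z, w⟫_ℝ := by
  rw [Complex.inner, mul_comm]

theorem Complex.re_conj_mul_ofReal_mul (z w : ℂ) (r : ℝ) :
    (conj z * (r * w)).re = r * ⟪z, w⟫_ℝ := by
  rw [mul_left_comm, Complex.re_ofReal_mul, Complex.re_conj_mul_eq_inner]

theorem Complex.inner_mul_self (c w : ℂ) : ⟪c * w, w⟫_ℝ = c.re * ‖w‖ ^ 2 := by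
  rw [Complex.inner, Complex.sq_norm, Complex.normSq_apply]
  simp only [Complex.mul_re, Complex.mul_im, Complex.conj_re, Complex.conj_im]
  ring

theorem Complex.inner_add_mul_self (z w c : ℂ) :
    ⟪z + c * w, w⟫_ℝ = ⟪w, z⟫_ℝ + c.re * ‖w‖ ^ 2 := by
  rw [inner_add_left, Complex.inner_mul_self, real_inner_comm]

theorem Complex.inner_add_add_mul_self (w u c : ℂ) :
    ⟪w + u + c * w, w⟫_ℝ = (1 + c.re) * ‖w‖ ^ 2 + ⟪w, u⟫_ℝ := by
  rw [Complex.inner_add_mul_self, inner_add_right, real_inner_self_eq_norm_sq]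
  ring

section
variable {E F : Type*} [NormedAddCommGroup E] [NormedSpace ℝ E]
  [NormedAddCommGroup F] [InnerProductSpace ℝ F]

theorem fderiv_norm_sq_comp_apply {f : E → F} {x : E} (hf : DifferentiableAt ℝ f x) (u : E) :
    fderiv ℝ (fun y => ‖f y‖ ^ 2) x u = 2 * ⟪f x, fderiv ℝ f x u⟫_ℝ := by
  rw [hf.hasFDerivAt.norm_sq.fderiv]
  simp

end

section
variable {d : ℕ} {F : Type*} [NormedAddCommGroup F] [NormedSpace ℝ F]

theorem EuclideanSpace.clm_apply_eq_sum (L : EuclideanSpace ℝ (Fin d) →L[ℝ] F)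
    (x : EuclideanSpace ℝ (Fin d)) : L x = ∑ j, x j • L (EuclideanSpace.single j 1) := by
  conv_lhs => rw [← (EuclideanSpace.basisFun (Fin d) ℝ).sum_repr x]
  simp [map_sum, map_smul]

theorem xdot_eq_fderiv_apply (v : EuclideanSpace ℝ (Fin d) → ℂ) (x : EuclideanSpace ℝ (Fin d)) :
    xdot v x = fderiv ℝ v x x := by
  simp [EuclideanSpace.clm_apply_eq_sum (fderiv ℝ v x) x, xdot, pd, Complex.real_smul]

theorem sum_fderiv_coord_mul {R : EuclideanSpace ℝ (Fin d) → ℝ} {x : EuclideanSpace ℝ (Fin d)}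
    (hR : DifferentiableAt ℝ R x) :
    ∑ j, fderiv ℝ (fun y : EuclideanSpace ℝ (Fin d) => y j * R y) x (EuclideanSpace.single j 1)
      = d * R x + fderiv ℝ R x x := by
  have hcoord (j : Fin d) : HasFDerivAt (fun y : EuclideanSpace ℝ (Fin d) => y j)
      (EuclideanSpace.proj (𝕜 := ℝ) j) x :=
    (EuclideanSpace.proj (𝕜 := ℝ) (ι := Fin d) j).hasFDerivAt
  simp [fderiv_fun_mul (hcoord _).differentiableAt hR, fun j => (hcoord j).fderiv,
    EuclideanSpace.clm_apply_eq_sum (fderiv ℝ R x) x, Finset.sum_add_distrib, add_comm]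

end

section
variable {d : ℕ} {v : EuclideanSpace ℝ (Fin d) → ℂ} {x : EuclideanSpace ℝ (Fin d)}

theorem ContDiffAt.differentiableAt_fderiv (hv : ContDiffAt ℝ 2 v x) :
    DifferentiableAt ℝ (fderiv ℝ v) x :=
  (hv.fderiv_right (m := 1) (by norm_num)).differentiableAt one_ne_zero

theorem fderiv_pd_apply (hv : ContDiffAt ℝ 2 v x) (j : Fin d) (u : EuclideanSpace ℝ (Fin d)) :
    fderiv ℝ (pd v j) x u = fderiv ℝ (fderiv ℝ v) x u (EuclideanSpace.single j 1) := by
  change fderiv ℝ (fun y => fderiv ℝ v y (EuclideanSpace.single j 1)) x u = _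
  simp [fderiv_clm_apply hv.differentiableAt_fderiv (differentiableAt_const _)]

theorem differentiableAt_pd (hv : ContDiffAt ℝ 2 v x) (j : Fin d) :
    DifferentiableAt ℝ (pd v j) x :=
  hv.differentiableAt_fderiv.clm_apply (differentiableAt_const _)

theorem xdot_eq_fun_fderiv : xdot v = fun y => fderiv ℝ v y y :=
  funext (xdot_eq_fderiv_apply v)

theorem differentiableAt_xdot (hv : ContDiffAt ℝ 2 v x) : DifferentiableAt ℝ (xdot v) x := by
  rw [xdot_eq_fun_fderiv]
  exact hv.differentiableAt_fderiv.clm_apply differentiableAt_id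

theorem pd_xdot (hv : ContDiffAt ℝ 2 v x) (j : Fin d) :
    pd (xdot v) j x = pd v j x + xdot (pd v j) x := by
  rw [xdot_eq_fderiv_apply (pd v j), fderiv_pd_apply hv, xdot_eq_fun_fderiv, pd,
    fderiv_clm_apply hv.differentiableAt_fderiv differentiableAt_fun_id,
    hv.isSymmSndFDerivAt (by simp)]
  simp [pd]

theorem differentiableAt_gradNormSq (hv : ContDiffAt ℝ 2 v x) :
    DifferentiableAt ℝ (gradNormSq v) x := by
  unfold gradNormSq
  exact DifferentiableAt.fun_sum fun j _ => (differentiableAt_pd hv j).norm_sq ℝ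

theorem fderiv_gradNormSq_apply (hv : ContDiffAt ℝ 2 v x) (u : EuclideanSpace ℝ (Fin d)) :
    fderiv ℝ (gradNormSq v) x u = 2 * ∑ j, ⟪pd v j x, fderiv ℝ (pd v j) x u⟫_ℝ := by
  unfold gradNormSq
  rw [fderiv_fun_sum fun j _ => (differentiableAt_pd hv j).norm_sq ℝ, Finset.mul_sum]
  simp [fderiv_norm_sq_comp_apply (differentiableAt_pd hv _)]

theorem pd_xdot_add_const_mul (hv : ContDiffAt ℝ 2 v x) (c : ℂ) (j : Fin d) :
    pd (fun y => xdot v y + c * v y) j x = pd v j x + xdot (pd v j) x + c * pd v j x := by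
  have hV : DifferentiableAt ℝ v x := hv.differentiableAt (by norm_num)
  rw [← pd_xdot hv, pd, fderiv_fun_add (differentiableAt_xdot hv) (hV.const_mul c),
    fderiv_const_mul hV]
  rfl

theorem fderiv_mul_normSq_sub_mul_gradNormSq_apply_self (hv : ContDiffAt ℝ 2 v x) (m a : ℝ) :
    fderiv ℝ (fun y => m * ‖v y‖ ^ 2 - a * gradNormSq v y) x x
      = 2 * m * ⟪v x, xdot v x⟫_ℝ - 2 * a * ∑ j, ⟪pd v j x, xdot (pd v j) x⟫_ℝ := by
  have hV : DifferentiableAt ℝ v x := hv.differentiableAt (by norm_num)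
  rw [fderiv_fun_sub ((hV.norm_sq ℝ).const_mul _) ((differentiableAt_gradNormSq hv).const_mul _),
    fderiv_const_mul (hV.norm_sq ℝ), fderiv_const_mul (differentiableAt_gradNormSq hv)]
  simp only [sub_apply, smul_apply, smul_eq_mul, fderiv_norm_sq_comp_apply hV,
    fderiv_gradNormSq_apply hv, ← xdot_eq_fderiv_apply]
  ring

theorem sum_fderiv_re_conj_mul_pd_add_coord_mul (hv : ContDiffAt ℝ 2 v x)
    {M : EuclideanSpace ℝ (Fin d) → ℂ} (hM : DifferentiableAt ℝ M x)
    {R : EuclideanSpace ℝ (Fin d) → ℝ} (hR : DifferentiableAt ℝ R x) (a : ℝ) :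
    ∑ j, fderiv ℝ (fun y : EuclideanSpace ℝ (Fin d) =>
        2 * (conj (M y) * (a * pd v j y)).re + y j * R y) x (EuclideanSpace.single j 1)
      = 2 * a * (⟪M x, lap v x⟫_ℝ + ∑ j, ⟪pd M j x, pd v j x⟫_ℝ) + d * R x
        + fderiv ℝ R x x := by
  have hflux (j : Fin d) : (fun y : EuclideanSpace ℝ (Fin d) =>
      2 * (conj (M y) * (a * pd v j y)).re + y j * R y)
      = fun y => 2 * a * ⟪M y, pd v j y⟫_ℝ + y j * R y := by
    funext y
    rw [Complex.re_conj_mul_ofReal_mul, mul_assoc]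
  have hcoord (j : Fin d) : DifferentiableAt ℝ (fun y : EuclideanSpace ℝ (Fin d) => y j) x :=
    (EuclideanSpace.proj (𝕜 := ℝ) (ι := Fin d) j).differentiableAt
  have hinner (j : Fin d) : DifferentiableAt ℝ (fun y => 2 * a * ⟪M y, pd v j y⟫_ℝ) x :=
    (hM.inner ℝ (differentiableAt_pd hv j)).const_mul _
  have hterm (j : Fin d) : fderiv ℝ (fun y : EuclideanSpace ℝ (Fin d) =>
        2 * a * ⟪M y, pd v j y⟫_ℝ + y j * R y) x (EuclideanSpace.single j 1)
      = 2 * a * (⟪M x, pd (pd v j) j x⟫_ℝ + ⟪pd M j x, pd v j x⟫_ℝ)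
        + fderiv ℝ (fun y : EuclideanSpace ℝ (Fin d) => y j * R y) x
            (EuclideanSpace.single j 1) := by
    rw [fderiv_fun_add (hinner j) ((hcoord j).fun_mul hR),
      fderiv_const_mul (hM.inner ℝ (differentiableAt_pd hv j)), add_apply, smul_apply,
      fderiv_inner_apply ℝ hM (differentiableAt_pd hv j), smul_eq_mul]
    rfl
  simp only [hflux, hterm, Finset.sum_add_distrib, ← Finset.mul_sum, sum_fderiv_coord_mul hR, lap,
    inner_sum]
  ring

end

theorem stmt0_general {d : ℕ} (D : Set (EuclideanSpace ℝ (Fin d)))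
    (hD : IsOpen D) (v : EuclideanSpace ℝ (Fin d) → ℂ)
    (hv : ContDiffOn ℝ 2 v D) (a n k α β : ℝ)
    (x : EuclideanSpace ℝ (Fin d)) (hx : x ∈ D) :
    2 * ((starRingEnd ℂ) (xdot v x - Complex.I * k * β * v x + α * v x) *
          (a * lap v x + k ^ 2 * n * v x)).re
      = (∑ j : Fin d, fderiv ℝ (fun y : EuclideanSpace ℝ (Fin d) =>
            2 * ((starRingEnd ℂ) (xdot v y - Complex.I * k * β * v y + α * v y) *
              (a * pd v j y)).re
            + y j * (k ^ 2 * n * ‖v y‖ ^ 2 - a * gradNormSq v y)) x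
            (EuclideanSpace.single j 1))
        - (2 * α - d + 2) * a * gradNormSq v x
        - (d - 2 * α) * n * k ^ 2 * ‖v x‖ ^ 2 := by
  have hvx : ContDiffAt ℝ 2 v x := hv.contDiffAt (hD.mem_nhds hx)
  have hV : DifferentiableAt ℝ v x := hvx.differentiableAt (by norm_num)
  set c : ℂ := α - Complex.I * k * β with hc
  have hM (y : EuclideanSpace ℝ (Fin d)) :
      xdot v y - Complex.I * k * β * v y + α * v y = xdot v y + c * v y := by ring
  have hMd : DifferentiableAt ℝ (fun y => xdot v y + c * v y) x :=
    (differentiableAt_xdot hvx).add (hV.const_mul c)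
  have hR : DifferentiableAt ℝ (fun y => k ^ 2 * n * ‖v y‖ ^ 2 - a * gradNormSq v y) x :=
    ((hV.norm_sq ℝ).const_mul _).sub ((differentiableAt_gradNormSq hvx).const_mul _)
  have hflux := sum_fderiv_re_conj_mul_pd_add_coord_mul hvx hMd hR a
  beta_reduce at hflux
  have hcast : (k : ℂ) ^ 2 * n * v x = ((k ^ 2 * n : ℝ) : ℂ) * v x := by push_cast; ring
  have hcre : c.re = α := by simp [hc]
  simp only [hM]
  rw [hflux, fderiv_mul_normSq_sub_mul_gradNormSq_apply_self hvx]
  simp only [pd_xdot_add_const_mul hvx, Complex.inner_add_add_mul_self, Finset.sum_add_distrib,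
    ← Finset.mul_sum]
  rw [mul_add, Complex.add_re, hcast, Complex.re_conj_mul_ofReal_mul,
    Complex.re_conj_mul_ofReal_mul, Complex.inner_add_mul_self, hcre]
  unfold gradNormSq
  ring

/-- Morawetz-type pointwise identity (Lemma 4.1): with
`L v = aΔv + k²n v` and `M v = x·∇v − ikβv + αv`,
`2 Re(conj(M v) L v) = div[2Re(conj(M v) a∇v) + x(k²n|v|² − a|∇v|²)]
 − (2α − d + 2)a|∇v|² − (d − 2α)nk²|v|²` at every point of an open set `D`
on which `v` is `C²`. -/
theorem stmt0 {d : ℕ} (hd : 2 ≤ d) (D : Set (EuclideanSpace ℝ (Fin d)))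
    (hD : IsOpen D) (v : EuclideanSpace ℝ (Fin d) → ℂ)
    (hv : ContDiffOn ℝ 2 v D) (a n k α β : ℝ)
    (x : EuclideanSpace ℝ (Fin d)) (hx : x ∈ D) :
    2 * ((starRingEnd ℂ) (xdot v x - Complex.I * k * β * v x + α * v x) *
          (a * lap v x + k ^ 2 * n * v x)).re
      = (∑ j : Fin d, fderiv ℝ (fun y : EuclideanSpace ℝ (Fin d) =>
            2 * ((starRingEnd ℂ) (xdot v y - Complex.I * k * β * v y + α * v y) *
              (a * pd v j y)).re
            + y j * (k ^ 2 * n * ‖v y‖ ^ 2 - a * gradNormSq v y)) x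
            (EuclideanSpace.single j 1))
        - (2 * α - d + 2) * a * gradNormSq v x
        - (d - 2 * α) * n * k ^ 2 * ‖v x‖ ^ 2 :=
  stmt0_general D hD v hv a n k α β x hx

end
end

section
/- If Ω ⊂ ℝ^d is a bounded Lipschitz open set and Ω is star-shaped with respect to the point x₀ ∈ Ω, then (x − x₀)·n(x) ≥ 0 for every x ∈ ∂Ω at which the outward unit normal n(x) is defined; conversely, if (x − x₀)·n(x) ≥ 0 at every such x, then Ω is star-shaped with respect to x₀. -/
noncomputable section

open Metric

variable {d : ℕ}

/-- `Ω` is star-shaped with respect to the point `x₀`: every segment from `x₀`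
to a point of `Ω` is contained in `Ω`. -/
def StarShapedWrt (Ω : Set (EuclideanSpace ℝ (Fin d)))
    (x₀ : EuclideanSpace ℝ (Fin d)) : Prop :=
  ∀ x ∈ Ω, segment ℝ x₀ x ⊆ Ω

/-- `Ω` has Lipschitz boundary: near each boundary point, `Ω` is the subgraph,
in some unit direction `e`, of a Lipschitz function. -/
def HasLipschitzBoundary (Ω : Set (EuclideanSpace ℝ (Fin d))) : Prop :=
  ∀ x ∈ frontier Ω, ∃ (e : EuclideanSpace ℝ (Fin d)) (r L : ℝ)
    (f : EuclideanSpace ℝ (Fin d) → ℝ), ‖e‖ = 1 ∧ 0 < r ∧ 0 ≤ L ∧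
      LipschitzWith (Real.toNNReal L) f ∧
      ∀ y ∈ ball x r, (y ∈ Ω ↔ (inner ℝ y e : ℝ) < f (y - (inner ℝ y e : ℝ) • e))

/-- `ν` is the outward unit normal of `Ω` at the boundary point `x` (in the
Fréchet sense): `ν` is a unit vector, `⟪ν, y − x⟫ ≤ o(‖y − x‖)` for `y ∈ Ω`
near `x` and `⟪ν, y − x⟫ ≥ −o(‖y − x‖)` for `y ∉ Ω` near `x`. -/
def IsOutwardNormalAt (Ω : Set (EuclideanSpace ℝ (Fin d)))
    (x ν : EuclideanSpace ℝ (Fin d)) : Prop :=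
  ‖ν‖ = 1 ∧ ∀ ε > (0 : ℝ), ∃ δ > (0 : ℝ),
    (∀ y ∈ Ω, ‖y - x‖ < δ → (inner ℝ ν (y - x) : ℝ) ≤ ε * ‖y - x‖) ∧
    (∀ y ∉ Ω, ‖y - x‖ < δ → -(ε * ‖y - x‖) ≤ (inner ℝ ν (y - x) : ℝ))

/-!
If `Ω` is star-shaped about `x₀` then so is its closure, so `x + τ (x₀ - x)` lies in `closure Ω`
for small `τ > 0`; the defining inequality of the outward normal `ν` passes to the closure and
gives `τ ⟪ν, x₀ - x⟫ ≤ o(τ)`.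

Conversely, if a segment `[x₀, z]` leaves `Ω`, let `p` be its last exit point. Near `p`,
`Ω = {F < 0}` with `F y = ⟪y, e⟫ - f (y - ⟪y, e⟫ e)` Lipschitz and `F (y + s e) = F y + s`.
Wherever `F` has a gradient `g` at `y`, the point `y - F y • e` of `∂Ω` has outward normal
`g / ‖g‖`, and the hypothesis there says `F y ≤ ⟪y - x₀, g⟫`, i.e. `t ↦ F (x₀ + t u) / t` has
nonnegative derivative. By Rademacher's theorem and Fubini, almost every direction `u` meets
the non-differentiability set of `F` in a null set of times, and along such a ray the
absolutely continuous function `t ↦ F (x₀ + t u) / t` is nondecreasing. For directions `u`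
close to `z - x₀` this contradicts `F p = 0` and `F < 0` just after `p`.
-/

open Set Filter Topology MeasureTheory

local notation "E" => EuclideanSpace ℝ (Fin d)

theorem AbsolutelyContinuousOnInterval.le_of_ae_deriv_nonneg {f : ℝ → ℝ} {a b : ℝ}
    (hf : AbsolutelyContinuousOnInterval f a b) (hab : a ≤ b)
    (hf' : ∀ᵐ t, t ∈ Ioo a b → 0 ≤ deriv f t) : f a ≤ f b := by
  rw [← sub_nonneg, ← hf.integral_deriv_eq_sub]
  refine intervalIntegral.integral_nonneg_of_ae_restrict hab ?_
  exact (ae_restrict_congr_set Ioo_ae_eq_Icc).1 ((ae_restrict_iff' measurableSet_Ioo).2 hf')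

theorem ae_ae_add_smul_notMem {V : Type*} [NormedAddCommGroup V] [NormedSpace ℝ V]
    [MeasurableSpace V] [BorelSpace V] [FiniteDimensional ℝ V] (μ : Measure V)
    [μ.IsAddHaarMeasure] {N : Set V} (hN : μ N = 0) (x₀ : V) :
    ∀ᵐ u ∂μ, ∀ᵐ t : ℝ, x₀ + t • u ∉ N := by
  obtain ⟨N', hNN', hN'meas, hN'⟩ := exists_measurable_superset_of_null hN
  have hmeas : MeasurableSet {q : V × ℝ | x₀ + q.2 • q.1 ∉ N'} :=
    (hN'meas.preimage (by fun_prop)).compl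
  have hslice : ∀ᵐ t : ℝ, ∀ᵐ u ∂μ, x₀ + t • u ∉ N' := by
    filter_upwards [compl_mem_ae_iff.2 (measure_singleton (0 : ℝ))] with t ht
    rw [ae_iff]
    simp only [not_not]
    change μ ((fun u => t • u) ⁻¹' ((fun y => x₀ + y) ⁻¹' N')) = 0
    rw [Measure.addHaar_preimage_smul μ ht, measure_preimage_add, hN', mul_zero]
  filter_upwards [(Measure.ae_ae_comm hmeas).2 hslice] with u hu
  filter_upwards [hu] with t ht
  exact fun h => ht (hNN' h)

theorem exists_last_notMem {X : Type*} [TopologicalSpace X] {Ω : Set X} (hΩ : IsOpen Ω)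
    {γ : ℝ → X} (hγ : Continuous γ) {s : ℝ} (hs : s ≤ 1) (hγs : γ s ∉ Ω) (hγ1 : γ 1 ∈ Ω) :
    ∃ b, s ≤ b ∧ γ b ∉ Ω ∧ ∀ᶠ t in 𝓝[>] b, γ t ∈ Ω := by
  have hT : IsCompact (Icc s 1 ∩ γ ⁻¹' Ωᶜ) :=
    isCompact_Icc.inter_right (hΩ.isClosed_compl.preimage hγ)
  obtain ⟨b, ⟨⟨hsb, hb1⟩, hbΩ⟩, hmax⟩ := hT.exists_isGreatest ⟨s, ⟨le_rfl, hs⟩, hγs⟩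
  have hb1 : b < 1 := lt_of_le_of_ne hb1 fun h => hbΩ (h ▸ hγ1)
  refine ⟨b, hsb, hbΩ, mem_of_superset (Ioc_mem_nhdsGT hb1) fun t ht => ?_⟩
  by_contra htΩ
  exact (hmax ⟨⟨hsb.trans ht.1.le, ht.2⟩, htΩ⟩).not_gt ht.1

theorem eq_zero_of_forall_mem_iff_neg {X : Type*} [TopologicalSpace X] {Ω U : Set X}
    {F : X → ℝ} (hF : Continuous F) (hU : IsOpen U) (hΩU : ∀ y ∈ U, y ∈ Ω ↔ F y < 0) {p : X}
    (hpU : p ∈ U) (hpΩ : p ∉ Ω) (hp : p ∈ closure Ω) : F p = 0 := by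
  refine le_antisymm ?_ (not_lt.1 (mt (hΩU p hpU).2 hpΩ))
  have hsub : closure (U ∩ Ω) ⊆ {y | F y ≤ 0} :=
    (closure_mono fun y hy => (hΩU y hy.1).1 hy.2).trans (closure_lt_subset_le hF continuous_const)
  exact hsub (hU.inter_closure ⟨hpU, hp⟩)

theorem IsOutwardNormalAt.mem_closure {Ω : Set E} {x ν : E} (hν : IsOutwardNormalAt Ω x ν) :
    x ∈ closure Ω := by
  by_contra hx
  have hout : ∀ᶠ y in 𝓝 x, y ∉ Ω := by
    simpa [mem_closure_iff_frequently, not_frequently] using hx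
  obtain ⟨δ, hδ, -, hδout⟩ := hν.2 (1 / 2) (by norm_num)
  have hline : Tendsto (fun s : ℝ => x - s • ν) (𝓝[>] 0) (𝓝 x) :=
    (Continuous.tendsto' (by fun_prop) 0 x (by simp)).mono_left nhdsWithin_le_nhds
  obtain ⟨s, hsΩ, hs0, hsδ⟩ := ((hline.eventually hout).and (Ioo_mem_nhdsGT hδ)).exists
  have hs : ‖x - s • ν - x‖ = s := by simp [norm_smul, hν.1, abs_of_pos hs0]
  have := hδout _ hsΩ (by rw [hs]; exact hsδ)
  rw [hs, sub_sub_cancel_left, inner_neg_right, real_inner_smul_right,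
    real_inner_self_eq_norm_sq, hν.1] at this
  linarith

theorem IsOutwardNormalAt.inner_le_of_mem_closure {Ω : Set E} {x ν : E}
    (hν : IsOutwardNormalAt Ω x ν) {ε : ℝ} (hε : 0 < ε) :
    ∃ δ > 0, ∀ y ∈ closure Ω, ‖y - x‖ < δ → inner ℝ ν (y - x) ≤ ε * ‖y - x‖ := by
  obtain ⟨δ, hδ, hin, -⟩ := hν.2 ε hε
  refine ⟨δ, hδ, fun y hy hyx => ?_⟩
  have hclosed : IsClosed {y : E | inner ℝ ν (y - x) ≤ ε * ‖y - x‖} :=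
    isClosed_le (by fun_prop) (by fun_prop)
  have hball : y ∈ closure (ball x δ ∩ Ω) :=
    isOpen_ball.inter_closure ⟨by rwa [mem_ball, dist_eq_norm], hy⟩
  refine closure_minimal (fun y' hy' => ?_) hclosed hball
  exact hin y' hy'.2 (by simpa [dist_eq_norm] using hy'.1)

theorem StarConvex.inner_sub_nonneg_of_isOutwardNormalAt {Ω : Set E} {x₀ x ν : E}
    (hΩ : StarConvex ℝ x₀ Ω) (hx : x ∈ closure Ω) (hν : IsOutwardNormalAt Ω x ν) :
    0 ≤ inner ℝ (x - x₀) ν := by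
  suffices hc : inner ℝ ν (x₀ - x) ≤ 0 by
    rwa [real_inner_comm, ← neg_sub, inner_neg_right, neg_nonneg]
  refine le_of_forall_pos_le_add fun η hη => ?_
  set ρ := ‖x₀ - x‖
  obtain ⟨δ, hδ, hcl⟩ := hν.inner_le_of_mem_closure (ε := η / (ρ + 1)) (by positivity)
  have hsmall : ∀ᶠ τ in 𝓝[>] (0 : ℝ), τ < 1 ∧ τ * ρ < δ := by
    have hlim : Tendsto (fun τ : ℝ => τ * ρ) (𝓝 0) (𝓝 0) :=
      Continuous.tendsto' (by fun_prop) 0 0 (by simp)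
    exact nhdsWithin_le_nhds ((gt_mem_nhds one_pos).and (hlim.eventually (gt_mem_nhds hδ)))
  obtain ⟨τ, ⟨hτ1, hτδ⟩, hτ0 : 0 < τ⟩ := (hsmall.and self_mem_nhdsWithin).exists
  have hy : x + τ • (x₀ - x) ∈ closure Ω := by
    refine map_mem_closure (f := fun y => y + τ • (x₀ - y)) (by fun_prop) hx fun y hy => ?_
    convert hΩ hy hτ0.le (sub_nonneg.2 hτ1.le) (add_sub_cancel τ 1) using 1
    module
  have hnorm : ‖x + τ • (x₀ - x) - x‖ = τ * ρ := by
    rw [add_sub_cancel_left, norm_smul, Real.norm_of_nonneg hτ0.le]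
  have key := hcl _ hy (by rw [hnorm]; exact hτδ)
  rw [hnorm, add_sub_cancel_left, real_inner_smul_right] at key
  have hρ : η / (ρ + 1) * ρ ≤ η := by
    rw [div_mul_eq_mul_div, div_le_iff₀ (by positivity)]
    nlinarith [norm_nonneg (x₀ - x)]
  nlinarith

theorem isOutwardNormalAt_of_hasGradientAt {Ω U : Set E} {F : E → ℝ} {x z : E}
    (hU : U ∈ 𝓝 x) (hΩU : ∀ y ∈ U, y ∈ Ω ↔ F y < 0) (hFx : F x = 0)
    (hF : HasGradientAt F z x) (hz : z ≠ 0) : IsOutwardNormalAt Ω x (‖z‖⁻¹ • z) := by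
  have hz' : 0 < ‖z‖ := norm_pos_iff.2 hz
  refine ⟨norm_smul_inv_norm hz, fun ε hε => ?_⟩
  obtain ⟨δ, hδ, hnear⟩ :=
    Metric.eventually_nhds_iff.1 ((hF.hasFDerivAt.isLittleO.def (mul_pos hε hz')).and hU)
  have hest : ∀ y, ‖y - x‖ < δ → y ∈ U ∧
      |F y - inner ℝ z (y - x)| ≤ ‖z‖ * (ε * ‖y - x‖) := fun y hyx => by
    obtain ⟨hest, hyU⟩ := hnear (by rwa [dist_eq_norm])
    rw [hFx, sub_zero, InnerProductSpace.toDual_apply_apply, Real.norm_eq_abs] at hest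
    exact ⟨hyU, by linarith⟩
  refine ⟨δ, hδ, fun y hy hyx => ?_, fun y hy hyx => ?_⟩
  · obtain ⟨hyU, hest⟩ := hest y hyx
    rw [real_inner_smul_left, inv_mul_le_iff₀ hz']
    linarith [(abs_le.1 hest).1, (hΩU y hyU).1 hy]
  · obtain ⟨hyU, hest⟩ := hest y hyx
    rw [real_inner_smul_left, le_inv_mul_iff₀ hz']
    linarith [(abs_le.1 hest).2, not_lt.1 (mt (hΩU y hyU).2 hy)]

theorem inner_sub_nonneg_of_hasGradientAt {Ω U : Set E} {F : E → ℝ} {x₀ x z : E}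
    (hnormal : ∀ x ∈ frontier Ω, ∀ ν, IsOutwardNormalAt Ω x ν → 0 ≤ inner ℝ (x - x₀) ν)
    (hU : U ∈ 𝓝 x) (hΩU : ∀ y ∈ U, y ∈ Ω ↔ F y < 0) (hFx : F x = 0)
    (hF : HasGradientAt F z x) : 0 ≤ inner ℝ (x - x₀) z := by
  rcases eq_or_ne z 0 with rfl | hz
  · simp
  have hν := isOutwardNormalAt_of_hasGradientAt hU hΩU hFx hF hz
  have hxΩ : x ∉ Ω := fun hx => (hΩU x (mem_of_mem_nhds hU)).1 hx |>.ne hFx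
  have h := hnormal x ⟨hν.mem_closure, fun hx => hxΩ (interior_subset hx)⟩ _ hν
  rw [real_inner_smul_right] at h
  exact nonneg_of_mul_nonneg_right h (inv_pos.2 (norm_pos_iff.2 hz))

theorem HasGradientAt.add_smul_of_apply_add_smul {F : E → ℝ} {e y z : E}
    (hFe : ∀ y (s : ℝ), F (y + s • e) = F y + s) (hF : HasGradientAt F z y) (s : ℝ) :
    HasGradientAt F z (y + s • e) := by
  have hshift : (fun x => F (x + (-s) • e) + s) = F := funext fun x => by rw [hFe]; ring
  rw [← hshift, hasGradientAt_iff_hasFDerivAt]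
  refine ((hasFDerivAt_comp_add_right _).2 ?_).add_const s
  simpa using hF.hasFDerivAt

theorem HasGradientAt.inner_eq_one_of_apply_add_smul {F : E → ℝ} {e y z : E}
    (hFe : ∀ y (s : ℝ), F (y + s • e) = F y + s) (hF : HasGradientAt F z y) :
    inner ℝ z e = 1 := by
  have hline : HasDerivAt (fun s : ℝ => y + s • e) e 0 := by
    simpa using ((hasDerivAt_id (0 : ℝ)).smul_const e).const_add y
  have h := hF.hasFDerivAt.comp_hasDerivAt_of_eq 0 hline (by simp)
  simp only [Function.comp_def, hFe, InnerProductSpace.toDual_apply_apply] at h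
  exact h.unique (by simpa using (hasDerivAt_id (0 : ℝ)).const_add (F y))

theorem apply_le_inner_sub_of_hasGradientAt {Ω U : Set E} {F : E → ℝ} {x₀ e y z : E}
    (hnormal : ∀ x ∈ frontier Ω, ∀ ν, IsOutwardNormalAt Ω x ν → 0 ≤ inner ℝ (x - x₀) ν)
    (hFe : ∀ y (s : ℝ), F (y + s • e) = F y + s) (hU : IsOpen U)
    (hΩU : ∀ y ∈ U, y ∈ Ω ↔ F y < 0) (hF : HasGradientAt F z y) (hyU : y - F y • e ∈ U) :
    F y ≤ inner ℝ (y - x₀) z := by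
  have h := inner_sub_nonneg_of_hasGradientAt hnormal
    (hU.mem_nhds (by rwa [neg_smul, ← sub_eq_add_neg])) hΩU (by rw [hFe]; ring)
    (hF.add_smul_of_apply_add_smul hFe (-F y))
  rw [add_sub_right_comm, inner_add_left, real_inner_smul_left, real_inner_comm z e,
    hF.inner_eq_one_of_apply_add_smul hFe] at h
  linarith

theorem div_le_div_along_ray {Ω U : Set E} {F : E → ℝ} {K : NNReal} {x₀ e u : E} {a c : ℝ}
    (hnormal : ∀ x ∈ frontier Ω, ∀ ν, IsOutwardNormalAt Ω x ν → 0 ≤ inner ℝ (x - x₀) ν)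
    (hF : LipschitzWith K F) (hFe : ∀ y (s : ℝ), F (y + s • e) = F y + s) (hU : IsOpen U)
    (hΩU : ∀ y ∈ U, y ∈ Ω ↔ F y < 0) (ha : 0 < a) (hac : a ≤ c)
    (hrayU : ∀ t ∈ Icc a c, x₀ + t • u - F (x₀ + t • u) • e ∈ U)
    (hdiff : ∀ᵐ t : ℝ, DifferentiableAt ℝ F (x₀ + t • u)) :
    F (x₀ + a • u) / a ≤ F (x₀ + c • u) / c := by
  have hray : LipschitzWith ‖u‖₊ fun t : ℝ => x₀ + t • u :=
    LipschitzWith.of_dist_le_mul fun t t' => by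
      rw [dist_add_left, dist_eq_norm, ← sub_smul, norm_smul, Real.dist_eq, mul_comm]; rfl
  have hinv : ContDiffOn ℝ 1 (Inv.inv : ℝ → ℝ) (uIcc a c) :=
    (contDiffOn_inv ℝ).mono fun t ht => by
      rw [uIcc_of_le hac] at ht; exact (ha.trans_le ht.1).ne'
  simp only [div_eq_mul_inv]
  refine AbsolutelyContinuousOnInterval.le_of_ae_deriv_nonneg
    ((hF.comp hray).lipschitzOnWith.absolutelyContinuousOnInterval.fun_mul
      hinv.absolutelyContinuousOnInterval) hac ?_
  filter_upwards [hdiff] with t ht htI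
  have ht0 : 0 < t := ha.trans htI.1
  obtain ⟨g, hg⟩ : ∃ g, HasGradientAt F g (x₀ + t • u) := ⟨_, ht.hasGradientAt⟩
  have hkey := apply_le_inner_sub_of_hasGradientAt hnormal hFe hU hΩU hg
    (hrayU t (Ioo_subset_Icc_self htI))
  rw [add_sub_cancel_left, real_inner_smul_left, real_inner_comm] at hkey
  have hline : HasDerivAt (fun s : ℝ => x₀ + s • u) u t := by
    simpa using ((hasDerivAt_id t).smul_const u).const_add x₀
  have hderiv := (hg.hasFDerivAt.comp_hasDerivAt t hline).fun_mul (hasDerivAt_inv ht0.ne')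
  rw [hderiv.deriv, InnerProductSpace.toDual_apply_apply, Function.comp_apply]
  have hquot : inner ℝ g u * t⁻¹ + F (x₀ + t • u) * -(t ^ 2)⁻¹
      = (t * inner ℝ g u - F (x₀ + t • u)) / t ^ 2 := by
    field_simp
    ring
  rw [hquot]
  exact div_nonneg (by linarith) (by positivity)

def heightAboveGraph (e : E) (f : E → ℝ) (y : E) : ℝ :=
  inner ℝ y e - f (y - inner ℝ y e • e)

theorem heightAboveGraph_add_smul {e : E} (he : ‖e‖ = 1) (f : E → ℝ) (y : E) (s : ℝ) :
    heightAboveGraph e f (y + s • e) = heightAboveGraph e f y + s := by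
  have hee : inner ℝ e e = (1 : ℝ) := by rw [real_inner_self_eq_norm_sq, he, one_pow]
  have hproj : y + s • e - inner ℝ (y + s • e) e • e = y - inner ℝ y e • e := by
    rw [inner_add_left, real_inner_smul_left, hee]; module
  rw [heightAboveGraph, heightAboveGraph, hproj, inner_add_left, real_inner_smul_left, hee]
  ring

theorem exists_lipschitzWith_heightAboveGraph (e : E) {f : E → ℝ} {K : NNReal}
    (hf : LipschitzWith K f) : ∃ K', LipschitzWith K' (heightAboveGraph e f) := by
  let P : E →L[ℝ] E := ContinuousLinearMap.id ℝ E - (innerSL ℝ e).smulRight e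
  have hF : heightAboveGraph e f = fun y => innerSL ℝ e y - f (P y) := by
    ext y; simp [heightAboveGraph, P, real_inner_comm e]
  exact ⟨_, hF ▸ (innerSL ℝ e).lipschitz.sub (hf.comp P.lipschitz)⟩

theorem not_eventually_mem_along_ray {Ω U : Set E} {F : E → ℝ} {K : NNReal} {x₀ e v : E}
    {b : ℝ} (hnormal : ∀ x ∈ frontier Ω, ∀ ν, IsOutwardNormalAt Ω x ν → 0 ≤ inner ℝ (x - x₀) ν)
    (hF : LipschitzWith K F) (hFe : ∀ y (s : ℝ), F (y + s • e) = F y + s) (hU : IsOpen U)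
    (hΩU : ∀ y ∈ U, y ∈ Ω ↔ F y < 0) (hb : 0 < b) (hpU : x₀ + b • v ∈ U)
    (hFp : F (x₀ + b • v) = 0) : ¬ ∀ᶠ t in 𝓝[>] b, x₀ + t • v ∈ Ω := by
  intro hafter
  set Φ : E × ℝ → E := fun q => x₀ + q.2 • (v + q.1)
  have hΦ : Continuous Φ := by fun_prop
  have hΦ0 : Φ (0, b) = x₀ + b • v := by simp [Φ]
  have hnear : ∀ᶠ q in 𝓝 ((0 : E), b), Φ q ∈ U ∧ Φ q - F (Φ q) • e ∈ U :=
    ((hΦ.tendsto _).eventually (hU.mem_nhds (by rwa [hΦ0]))).and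
      (((hΦ.sub ((hF.continuous.comp hΦ).smul continuous_const)).tendsto _).eventually
        (hU.mem_nhds (by simpa [hΦ0, hFp])))
  obtain ⟨ρ, hρ, hρU⟩ := Metric.eventually_nhds_iff.1 hnear
  obtain ⟨t₂, ht₂Ω, hbt₂, ht₂ρ⟩ :=
    (hafter.and (Ioo_mem_nhdsGT (lt_add_of_pos_right b hρ))).exists
  have hdist : ∀ w : E, ‖w‖ < ρ → ∀ t ∈ Icc b t₂, dist (w, t) ((0 : E), b) < ρ :=
    fun w hw t ht => by
      rw [Prod.dist_eq, dist_zero_right, Real.dist_eq, abs_of_nonneg (sub_nonneg.2 ht.1)]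
      exact max_lt hw (by linarith [ht.2])
  set ψ : E → ℝ → ℝ := fun w t => F (x₀ + t • (v + w)) / t
  -- The strict inequality at `w = 0` persists on an open, hence non-null, set of directions,
  -- and a.e. direction there is generic for the non-differentiability set of `F`.
  set A : Set E := {w | ψ w t₂ < ψ w b} ∩ ball 0 ρ
  have hA : IsOpen A := by
    refine (isOpen_lt ?_ ?_).inter isOpen_ball <;>
    exact (hF.continuous.comp (by fun_prop)).div_const _
  have h0A : (0 : E) ∈ A := by
    refine ⟨?_, mem_ball_self hρ⟩
    have hFt₂ : F (x₀ + t₂ • v) < 0 := by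
      have := (hρU (hdist 0 (by simpa using hρ) t₂ ⟨hbt₂.le, le_rfl⟩)).1
      exact (hΩU _ (by simpa [Φ] using this)).1 ht₂Ω
    simpa [ψ, hFp] using div_neg_of_neg_of_pos hFt₂ (hb.trans hbt₂)
  have hgood : ∀ᵐ w : E, ∀ᵐ t : ℝ, DifferentiableAt ℝ F (x₀ + t • (v + w)) := by
    have hrays :=
      ae_ae_add_smul_notMem volume (ae_iff.1 (hF.ae_differentiableAt (μ := volume))) x₀
    filter_upwards [(measurePreserving_add_left volume v).quasiMeasurePreserving.ae hrays]
      with w hw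
    filter_upwards [hw] with t ht using not_not.1 ht
  have : (ae (volume.restrict A)).NeBot := ae_restrict_neBot.2 (hA.measure_ne_zero _ ⟨0, h0A⟩)
  obtain ⟨w, hwA, hw⟩ := ((ae_restrict_mem hA.measurableSet).and (ae_restrict_of_ae hgood)).exists
  have hmono := div_le_div_along_ray (u := v + w) hnormal hF hFe hU hΩU hb hbt₂.le
    (fun t ht => (hρU (hdist w (by simpa using hwA.2) t ht)).2) hw
  exact hmono.not_gt hwA.1

theorem starShapedWrt_of_inner_sub_nonneg {Ω : Set E} (hΩopen : IsOpen Ω)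
    (hΩlip : HasLipschitzBoundary Ω) {x₀ : E} (hx₀ : x₀ ∈ Ω)
    (hnormal : ∀ x ∈ frontier Ω, ∀ ν, IsOutwardNormalAt Ω x ν → 0 ≤ inner ℝ (x - x₀) ν) :
    StarShapedWrt Ω x₀ := by
  intro z hz q hq
  rw [segment_eq_image'] at hq
  obtain ⟨s, hs, rfl⟩ := hq
  by_contra hqΩ
  set γ : ℝ → E := fun t => x₀ + t • (z - x₀)
  have hγ : Continuous γ := by fun_prop
  obtain ⟨b, hsb, hbΩ, hafter⟩ :=
    exists_last_notMem hΩopen hγ hs.2 hqΩ (by simpa [γ] using hz)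
  have hb : 0 < b := lt_of_le_of_ne (hs.1.trans hsb) fun h => hbΩ (by simpa [γ, ← h])
  have hbcl : γ b ∈ closure Ω :=
    mem_closure_of_tendsto ((hγ.tendsto b).mono_left nhdsWithin_le_nhds) hafter
  obtain ⟨e, r, L, f, he, hr, -, hf, hgraph⟩ :=
    hΩlip (γ b) ⟨hbcl, fun h => hbΩ (interior_subset h)⟩
  obtain ⟨K, hF⟩ := exists_lipschitzWith_heightAboveGraph e hf
  have hΩU : ∀ y ∈ ball (γ b) r, y ∈ Ω ↔ heightAboveGraph e f y < 0 :=
    fun y hy => (hgraph y hy).trans sub_neg.symm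
  exact not_eventually_mem_along_ray hnormal hF (heightAboveGraph_add_smul he f) isOpen_ball
    hΩU hb (mem_ball_self hr)
    (eq_zero_of_forall_mem_iff_neg hF.continuous isOpen_ball hΩU (mem_ball_self hr) hbΩ hbcl)
    hafter

theorem stmt3_general (Ω : Set (EuclideanSpace ℝ (Fin d))) (hΩopen : IsOpen Ω)
    (hΩlip : HasLipschitzBoundary Ω)
    (x₀ : EuclideanSpace ℝ (Fin d)) (hx₀ : x₀ ∈ Ω) :
    StarShapedWrt Ω x₀ ↔
      ∀ x ∈ frontier Ω, ∀ ν, IsOutwardNormalAt Ω x ν →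
        0 ≤ (inner ℝ (x - x₀) ν : ℝ) := by
  refine ⟨fun h x hx ν hν => ?_, starShapedWrt_of_inner_sub_nonneg hΩopen hΩlip hx₀⟩
  exact (starConvex_iff_segment_subset.2 h).inner_sub_nonneg_of_isOutwardNormalAt
    (frontier_subset_closure hx) hν

/-- Characterisation of star-shapedness for Lipschitz domains (Lemma 2.1(i)):
a bounded Lipschitz open set `Ω` is star-shaped with respect to `x₀ ∈ Ω` if and
only if `(x − x₀)·n(x) ≥ 0` at every boundary point where the outward unit
normal is defined. -/
theorem stmt3 (Ω : Set (EuclideanSpace ℝ (Fin d))) (hd : 2 ≤ d)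
    (hΩopen : IsOpen Ω) (hΩbdd : Bornology.IsBounded Ω)
    (hΩlip : HasLipschitzBoundary Ω)
    (x₀ : EuclideanSpace ℝ (Fin d)) (hx₀ : x₀ ∈ Ω) :
    StarShapedWrt Ω x₀ ↔
      ∀ x ∈ frontier Ω, ∀ ν, IsOutwardNormalAt Ω x ν →
        0 ≤ (inner ℝ (x - x₀) ν : ℝ) :=
  stmt3_general Ω hΩopen hΩlip x₀ hx₀

end
end
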